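/- Let d ≥ 1, g, h ∈ ℝ with g < 0, h < 0 and g ≠ h, let A ∈ ℂ with A ≠ 0 and k ∈ ℝ^d with k ≠ 0, and let φ(t,x) = A·exp(i(ωt − k·x)) be the plane wave with frequency ω = ‖k‖/√(−h). Then φ satisfies the Carrollian equation (□_g ∘ □_h)φ = 0 identically, but does NOT satisfy the equation (□_g ∘ □_g)φ = 0 (the Lorentzian-type equation with a single coupling). Hence the solution set of the Carrollian higher-derivative theory with distinct couplings is strictly larger than that of the theory with equal couplings. -/

import Mathlib

/-- Second time derivative: `(∂²φ/∂t²)(t,x)`. -/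
noncomputable def dtt (d : ℕ) (φ : ℝ × EuclideanSpace ℝ (Fin d) → ℂ) :
    ℝ × EuclideanSpace ℝ (Fin d) → ℂ :=
  fun p => deriv (deriv (fun u : ℝ => φ (u, p.2))) p.1

/-- Spatial Laplacian: `Σ_a (∂²φ/∂x_a²)(t,x)`, computed as second directional
derivatives along the coordinate directions. -/
noncomputable def lap (d : ℕ) (φ : ℝ × EuclideanSpace ℝ (Fin d) → ℂ) :
    ℝ × EuclideanSpace ℝ (Fin d) → ℂ :=
  fun p => ∑ a : Fin d,
    deriv (deriv (fun u : ℝ => φ (p.1, p.2 + u • EuclideanSpace.single a (1 : ℝ)))) 0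

/-- The Carrollian operator `□_g φ = g ∂²φ/∂t² + Δφ`. -/
noncomputable def carrollBox (d : ℕ) (g : ℝ) (φ : ℝ × EuclideanSpace ℝ (Fin d) → ℂ) :
    ℝ × EuclideanSpace ℝ (Fin d) → ℂ :=
  fun p => (g : ℂ) * dtt d φ p + lap d φ p

/-- The plane wave `φ(t,x) = A·exp(i(ωt − k·x))`. -/
noncomputable def planeWave (d : ℕ) (A : ℂ) (ω : ℝ) (k : EuclideanSpace ℝ (Fin d)) :
    ℝ × EuclideanSpace ℝ (Fin d) → ℂ :=
  fun p => A * Complex.exp (Complex.I * (((ω * p.1 : ℝ) : ℂ) - ((inner ℝ k p.2 : ℝ) : ℂ)))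

/-!
A plane wave is an eigenfunction of every Carrollian operator: `□_g φ = -(g ω² + ‖k‖²) φ`, so
`□_g □_h φ = (g ω² + ‖k‖²) (h ω² + ‖k‖²) φ`. The frequency `ω = ‖k‖ / √(-h)` kills the second
factor, while the first one equals `‖k‖² (1 - g / h)`, which vanishes only for `g = h`.
-/

open Complex

lemma hasDerivAt_const_mul_cexp_affine (A c b : ℂ) (u : ℝ) :
    HasDerivAt (fun u : ℝ => A * exp (c * u + b)) (c * (A * exp (c * u + b))) u := by
  have hlin : HasDerivAt (fun u : ℝ => c * (u : ℂ) + b) c u := by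
    simpa using ((hasDerivAt_id u).ofReal_comp.const_mul c).add_const b
  exact (hlin.cexp.const_mul A).congr_deriv (by ring)

lemma deriv_deriv_const_mul_cexp_affine (A c b : ℂ) :
    deriv (deriv fun u : ℝ => A * exp (c * u + b))
      = fun u : ℝ => c ^ 2 * (A * exp (c * u + b)) := by
  have hderiv : deriv (fun u : ℝ => A * exp (c * u + b))
      = fun u : ℝ => (c * A) * exp (c * u + b) := by
    funext u
    rw [(hasDerivAt_const_mul_cexp_affine A c b u).deriv]
    ring
  funext u
  rw [hderiv, (hasDerivAt_const_mul_cexp_affine (c * A) c b u).deriv]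
  ring

section PlaneWave

variable {d : ℕ} (A : ℂ) (ω : ℝ) (k : EuclideanSpace ℝ (Fin d))

lemma planeWave_apply_eq_zero_iff (p : ℝ × EuclideanSpace ℝ (Fin d)) :
    planeWave d A ω k p = 0 ↔ A = 0 := by
  simp [planeWave, exp_ne_zero]

lemma planeWave_mul_amplitude (c : ℂ) (p : ℝ × EuclideanSpace ℝ (Fin d)) :
    planeWave d (c * A) ω k p = c * planeWave d A ω k p :=
  mul_assoc c A _

lemma planeWave_along_time (x : EuclideanSpace ℝ (Fin d)) :
    (fun u : ℝ => planeWave d A ω k (u, x))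
      = fun u : ℝ => A * exp ((I * ω) * u + -(I * (inner ℝ k x : ℝ))) := by
  funext u
  simp only [planeWave]
  push_cast
  ring_nf

lemma planeWave_along_coordinate (p : ℝ × EuclideanSpace ℝ (Fin d)) (a : Fin d) :
    (fun u : ℝ => planeWave d A ω k (p.1, p.2 + u • EuclideanSpace.single a 1))
      = fun u : ℝ => A * exp (-(I * k a) * u + I * ((ω * p.1 : ℝ) - (inner ℝ k p.2 : ℝ))) := by
  funext u
  simp only [planeWave, inner_add_right, real_inner_smul_right,
    EuclideanSpace.inner_single_right, one_mul, conj_trivial]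
  push_cast
  ring_nf

lemma dtt_planeWave (p : ℝ × EuclideanSpace ℝ (Fin d)) :
    dtt d (planeWave d A ω k) p = -(ω : ℂ) ^ 2 * planeWave d A ω k p := by
  have hI : (I * ω) ^ 2 = -(ω : ℂ) ^ 2 := by rw [mul_pow, I_sq]; ring
  simp only [dtt, planeWave_along_time, deriv_deriv_const_mul_cexp_affine, hI]
  simp only [planeWave]
  push_cast
  ring_nf

lemma lap_planeWave (p : ℝ × EuclideanSpace ℝ (Fin d)) :
    lap d (planeWave d A ω k) p = -(‖k‖ : ℂ) ^ 2 * planeWave d A ω k p := by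
  have hterm (a : Fin d) :
      deriv (deriv fun u : ℝ => planeWave d A ω k (p.1, p.2 + u • EuclideanSpace.single a 1)) 0
        = -(k a : ℂ) ^ 2 * planeWave d A ω k p := by
    rw [planeWave_along_coordinate, deriv_deriv_const_mul_cexp_affine, neg_sq, mul_pow, I_sq]
    simp only [planeWave]
    push_cast
    ring_nf
  have hnorm : (‖k‖ : ℂ) ^ 2 = ∑ a, (k a : ℂ) ^ 2 := by
    exact_mod_cast EuclideanSpace.real_norm_sq_eq k
  simp only [lap, hterm, hnorm, ← Finset.sum_mul, Finset.sum_neg_distrib]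

lemma carrollBox_planeWave (g : ℝ) :
    carrollBox d g (planeWave d A ω k)
      = planeWave d (((-(g * ω ^ 2 + ‖k‖ ^ 2) : ℝ) : ℂ) * A) ω k := by
  funext p
  rw [carrollBox, dtt_planeWave, lap_planeWave, planeWave_mul_amplitude]
  push_cast
  ring

end PlaneWave

lemma mul_sq_div_sqrt_neg_add_sq_eq_zero_iff {g h κ : ℝ} (hh : h < 0) (hκ : κ ≠ 0) :
    g * (κ / √(-h)) ^ 2 + κ ^ 2 = 0 ↔ g = h := by
  have hh0 : h ≠ 0 := hh.ne
  have hfactor : g * (κ / √(-h)) ^ 2 + κ ^ 2 = κ ^ 2 * (h - g) / h := by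
    rw [div_pow, Real.sq_sqrt (by linarith)]
    field_simp
    ring
  simp [hfactor, hκ, hh0, sub_eq_zero, eq_comm]

theorem distinct_couplings_strictly_larger_general (d : ℕ) (g h : ℝ)
    (hh : h < 0) (hgh : g ≠ h) (A : ℂ) (hA : A ≠ 0)
    (k : EuclideanSpace ℝ (Fin d)) (hk : k ≠ 0) :
    (∀ p : ℝ × EuclideanSpace ℝ (Fin d),
        carrollBox d g (carrollBox d h (planeWave d A (‖k‖ / Real.sqrt (-h)) k)) p = 0)
    ∧ ¬ (∀ p : ℝ × EuclideanSpace ℝ (Fin d),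
        carrollBox d g (carrollBox d g (planeWave d A (‖k‖ / Real.sqrt (-h)) k)) p = 0) := by
  have hκ : ‖k‖ ≠ 0 := norm_ne_zero_iff.mpr hk
  have hsymbol_h := (mul_sq_div_sqrt_neg_add_sq_eq_zero_iff (g := h) hh hκ).mpr rfl
  have hsymbol_g := (mul_sq_div_sqrt_neg_add_sq_eq_zero_iff (g := g) hh hκ).not.mpr hgh
  simp only [carrollBox_planeWave, planeWave_apply_eq_zero_iff, mul_eq_zero, ofReal_eq_zero,
    neg_eq_zero]
  simp [hsymbol_h, hsymbol_g, hA]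

/-- for distinct negative couplings `g ≠ h`, the plane wave with
frequency `ω = ‖k‖/√(−h)` (and `A ≠ 0`, `k ≠ 0`) solves `(□_g ∘ □_h)φ = 0` but not
`(□_g ∘ □_g)φ = 0`: the Carrollian theory with distinct couplings has strictly more
solutions than the one with equal couplings. -/
theorem distinct_couplings_strictly_larger (d : ℕ) (hd : 1 ≤ d) (g h : ℝ)
    (hg : g < 0) (hh : h < 0) (hgh : g ≠ h) (A : ℂ) (hA : A ≠ 0)
    (k : EuclideanSpace ℝ (Fin d)) (hk : k ≠ 0) :
    (∀ p : ℝ × EuclideanSpace ℝ (Fin d),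
        carrollBox d g (carrollBox d h (planeWave d A (‖k‖ / Real.sqrt (-h)) k)) p = 0)
    ∧ ¬ (∀ p : ℝ × EuclideanSpace ℝ (Fin d),
        carrollBox d g (carrollBox d g (planeWave d A (‖k‖ / Real.sqrt (-h)) k)) p = 0) :=
  distinct_couplings_strictly_larger_general d g h hh hgh A hA k hk
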